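/- Let M be a finitely generated module over a commutative ring R with a basis σ_1,…,σ_n, and let τ_1,…,τ_m be a generating family of M. Then there exists a subset of {τ_1,…,τ_m} of size n which is again a basis of M, provided R is a local ring. -/

import Mathlib

open scoped TensorProduct

/-- Let `R` be a commutative local ring and `M` a free
`R`-module with basis `σ₁,…,σₙ`.  If `τ₁,…,τₘ` generate `M`, then some subfamily
of the `τᵢ` of size `n` is again a basis of `M`. -/
theorem exists_basis_subfamily_of_generators
    {R : Type*} [CommRing R] [IsLocalRing R]
    {M : Type*} [AddCommGroup M] [Module R M]
    {n m : ℕ} (σ : Module.Basis (Fin n) R M) (τ : Fin m → M)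
    (hτ : Submodule.span R (Set.range τ) = ⊤) :
    ∃ (s : Fin n ↪ Fin m) (b : Module.Basis (Fin n) R M), ∀ i, b i = τ (s i) := by
  classical
  have hMfin : Module.Finite R M := Module.Finite.of_basis σ
  set k := IsLocalRing.ResidueField R
  set V := k ⊗[R] M
  let bσ : Module.Basis (Fin n) k V := σ.baseChange k
  let g : Fin m → V := fun i => (1 : k) ⊗ₜ[R] τ i
  -- the images of τ span V over k
  have hg : Submodule.span k (Set.range g) = ⊤ := by
    rw [eq_top_iff]
    rintro z -
    induction z using TensorProduct.induction_on with
    | zero => exact zero_mem _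
    | add x y hx hy => exact add_mem hx hy
    | tmul a x => ?_
    have hx : (1 : k) ⊗ₜ[R] x ∈ (Submodule.span k (Set.range g)).restrictScalars R := by
      have : x ∈ Submodule.span R (Set.range τ) := by rw [hτ]; trivial
      refine Submodule.span_induction ?_ ?_ ?_ ?_ this
      · rintro _ ⟨i, rfl⟩
        exact Submodule.subset_span ⟨i, rfl⟩
      · simp [TensorProduct.tmul_zero]
      · intro y z _ _ hy hz
        rw [TensorProduct.tmul_add]; exact add_mem hy hz
      · intro r y _ hy
        rw [TensorProduct.tmul_smul]
        exact Submodule.smul_mem _ _ hy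
    have : a ⊗ₜ[R] x = a • ((1 : k) ⊗ₜ[R] x) := by
      rw [TensorProduct.smul_tmul', smul_eq_mul, mul_one]
    rw [this]
    exact Submodule.smul_mem _ _ hx
  -- choose a linearly independent spanning subset of the image
  obtain ⟨t, hts, htsp, htli⟩ := exists_linearIndependent k (Set.range g)
  rw [hg] at htsp
  have htfin : t.Finite := by
    have : Module.Finite k V := Module.Finite.of_basis bσ
    exact Set.Finite.ofFinset (Set.Finite.toFinset
      (htli.setFinite)) (by simp)
  haveI : Fintype t := htfin.fintype
  let bt : Module.Basis t k V := Module.Basis.mk htli (by rw [Subtype.range_coe, htsp])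
  have hcard : Fintype.card t = n := by
    have h1 := Module.finrank_eq_card_basis bt
    have h2 := Module.finrank_eq_card_basis bσ
    rw [h2, Fintype.card_fin] at h1
    omega
  let e : Fin n ≃ t := (Fintype.equivFinOfCardEq hcard).symm
  -- choose preimages under g
  let p : t → Fin m := fun x => (hts x.2).choose
  have hp : ∀ x : t, g (p x) = x := fun x => (hts x.2).choose_spec
  have hpinj : Function.Injective p := by
    intro x y hxy
    have : (x : V) = y := by rw [← hp x, ← hp y, hxy]
    exact Subtype.ext this
  let s : Fin n ↪ Fin m := ⟨p ∘ e, hpinj.comp e.injective⟩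
  -- τ ∘ s spans M by Nakayama
  have hspan : Submodule.span R (Set.range (τ ∘ s)) = ⊤ := by
    refine IsLocalRing.span_eq_top_of_tmul_eq_basis (R := R) (τ ∘ s)
      (bt.reindex e.symm) (fun i => ?_)
    show (1 : k) ⊗ₜ[R] τ (p (e i)) = _
    rw [Module.Basis.reindex_apply, Equiv.symm_symm, Module.Basis.mk_apply]
    exact hp (e i)
  -- the endomorphism sending σ i to τ (s i) is surjective, hence bijective
  let φ : M →ₗ[R] M := σ.constr ℕ (τ ∘ s)
  have hsurj : Function.Surjective φ := by
    rw [← LinearMap.range_eq_top, Module.Basis.constr_range, hspan]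
  have hinj : Function.Injective φ :=
    OrzechProperty.injective_of_surjective_endomorphism φ hsurj
  let b : Module.Basis (Fin n) R M := σ.map (LinearEquiv.ofBijective φ ⟨hinj, hsurj⟩)
  refine ⟨s, b, fun i => ?_⟩
  show φ (σ i) = τ (s i)
  exact σ.constr_basis ℕ (τ ∘ s) i
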